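/- arXiv:1611.04754 — 2 statements merged into one kernel-verified Lean document; each statement's English description precedes it below -/
import Mathlib

section
/- Let n ≥ 3 and let a, c, z be coprime integers with (a,c) ≠ (0,0). Define ω_∞(a,c,z) as the integral over pairs (b,w) ∈ ℝ² satisfying |aⁿw| ≤ 1, |cⁿw| ≤ 1, |zⁿw| ≤ 1, |b| ≤ 1, |(bc + z^(n+1)w)/a| ≤ 1 of (1/|a|) db dw when a ≠ 0 (and the analogous integral with d in place of b when c ≠ 0). Then there exist positive constants c₁, c₂ depending only on n such that c₁/max(|a|,|c|,|z|)^(n+1) ≤ ω_∞(a,c,z) ≤ c₂/max(|a|,|c|,|z|)^(n+1). -/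
open MeasureTheory

/-- The archimedean density ω_∞(a,c,z): an integral over (b,w) ∈ ℝ² (via the chart
with b when a ≠ 0, and the analogous chart with d when c ≠ 0). -/
noncomputable def omegaInf (n : ℕ) (a c z : ℤ) : ℝ :=
  if a ≠ 0 then
    ∫ p in {p : ℝ × ℝ |
        |(a : ℝ) ^ n * p.2| ≤ 1 ∧ |(c : ℝ) ^ n * p.2| ≤ 1 ∧ |(z : ℝ) ^ n * p.2| ≤ 1 ∧
        |p.1| ≤ 1 ∧ |(p.1 * (c : ℝ) + (z : ℝ) ^ (n + 1) * p.2) / (a : ℝ)| ≤ 1},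
      (1 / |(a : ℝ)| : ℝ)
  else
    ∫ p in {p : ℝ × ℝ |
        |(a : ℝ) ^ n * p.2| ≤ 1 ∧ |(c : ℝ) ^ n * p.2| ≤ 1 ∧ |(z : ℝ) ^ n * p.2| ≤ 1 ∧
        |p.1| ≤ 1 ∧ |((a : ℝ) * p.1 - (z : ℝ) ^ (n + 1) * p.2) / (c : ℝ)| ≤ 1},
      (1 / |(c : ℝ)| : ℝ)

/-!
The three conditions on `w` say `|w| ≤ M⁻ⁿ` with `M = max(|a|, |c|, |z|)`, so the region of
integration is the box `[-1, 1] × [-M⁻ⁿ, M⁻ⁿ]` cut by a slab `|α b + β w| ≤ r`, where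
`(r, α) = (|a|, c)` or `(|c|, a)` and `|β| = |z|ⁿ⁺¹`.

A box `[-A, A] × [-B, B]` meets a slab `|α x + β y| ≤ r` in area between `A B r / N` and
`4 A B r / N`, where `N = max(r, |α| A, |β| B)`: if `r = N` the slab contains the half-size box;
if `|α| A = N` the shear `(x, y) ↦ (x + (β / α) y, y)` maps the intersection onto a set lying
between the boxes of half-sides `(r / 2|α|, B / 2)` and `(r / |α|, B)`; the case `|β| B = N`
follows by swapping coordinates. Here `N = M` and `A B r / N = r / Mⁿ⁺¹`, and dividing by the
weight `r` gives `1 / Mⁿ⁺¹ ≤ ω_∞ ≤ 4 / Mⁿ⁺¹`.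
-/

open Set

def shear (k : ℝ) (p : ℝ × ℝ) : ℝ × ℝ := (p.1 + k * p.2, p.2)

def centeredRect (A B : ℝ) : Set (ℝ × ℝ) := {p | |p.1| ≤ A ∧ |p.2| ≤ B}

def boxSlab (A B α β r : ℝ) : Set (ℝ × ℝ) :=
  {p | |p.1| ≤ A ∧ |p.2| ≤ B ∧ |α * p.1 + β * p.2| ≤ r}

lemma measurePreserving_swap_volume {α β : Type*} [MeasureSpace α] [MeasureSpace β]
    [SFinite (volume : Measure α)] [SFinite (volume : Measure β)] :
    MeasurePreserving (Prod.swap : α × β → β × α) :=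
  Measure.measurePreserving_swap

lemma measurePreserving_shear (k : ℝ) : MeasurePreserving (shear k) := by
  have hskew : MeasurePreserving (fun p : ℝ × ℝ => (p.1, p.2 + k * p.1)) := by
    rw [Measure.volume_eq_prod]
    exact (MeasurePreserving.id volume).skew_product (by fun_prop)
      (.of_forall fun x => map_add_right_eq_self volume (k * x))
  exact measurePreserving_swap_volume.comp (hskew.comp measurePreserving_swap_volume)

lemma volume_centeredRect {A : ℝ} (hA : 0 ≤ A) (B : ℝ) :
    volume (centeredRect A B) = ENNReal.ofReal (4 * A * B) := by
  have : centeredRect A B = Icc (-A) A ×ˢ Icc (-B) B := by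
    ext p; simp only [centeredRect, mem_ofPred_eq, mem_prod, mem_Icc, abs_le]
  rw [this, Measure.volume_eq_prod, Measure.prod_prod, Real.volume_Icc, Real.volume_Icc,
    ← ENNReal.ofReal_mul (by linarith)]
  ring_nf

lemma mem_shear_preimage_centeredRect {k A B : ℝ} {p : ℝ × ℝ} :
    p ∈ shear k ⁻¹' centeredRect A B ↔ |p.1 + k * p.2| ≤ A ∧ |p.2| ≤ B :=
  Iff.rfl

lemma measurableSet_centeredRect (A B : ℝ) : MeasurableSet (centeredRect A B) := by
  unfold centeredRect; measurability

lemma volume_shear_preimage_centeredRect (k : ℝ) {A : ℝ} (hA : 0 ≤ A) (B : ℝ) :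
    volume (shear k ⁻¹' centeredRect A B) = ENNReal.ofReal (4 * A * B) := by
  rw [(measurePreserving_shear k).measure_preimage
    (measurableSet_centeredRect A B).nullMeasurableSet, volume_centeredRect hA]

lemma measureReal_mem_Icc_of_shear_sandwich (k : ℝ) {S : Set (ℝ × ℝ)} {A₁ B₁ A₂ B₂ : ℝ}
    (hA₁ : 0 ≤ A₁) (hB₁ : 0 ≤ B₁) (hA₂ : 0 ≤ A₂) (hB₂ : 0 ≤ B₂)
    (h₁ : shear k ⁻¹' centeredRect A₁ B₁ ⊆ S) (h₂ : S ⊆ shear k ⁻¹' centeredRect A₂ B₂) :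
    volume.real S ∈ Icc (4 * A₁ * B₁) (4 * A₂ * B₂) := by
  have hvol {A B : ℝ} (hA : 0 ≤ A) (hB : 0 ≤ B) :
      volume.real (shear k ⁻¹' centeredRect A B) = 4 * A * B := by
    rw [measureReal_def, volume_shear_preimage_centeredRect k hA,
      ENNReal.toReal_ofReal (by positivity)]
  have hfin : volume (shear k ⁻¹' centeredRect A₂ B₂) ≠ ⊤ := by
    rw [volume_shear_preimage_centeredRect k hA₂]; exact ENNReal.ofReal_ne_top
  exact ⟨hvol hA₁ hB₁ ▸ measureReal_mono h₁ (measure_ne_top_of_subset h₂ hfin),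
    hvol hA₂ hB₂ ▸ measureReal_mono h₂ hfin⟩

lemma measureReal_boxSlab_mem_Icc_of_le {A B α β r : ℝ} (hA : 0 ≤ A) (hB : 0 ≤ B)
    (hα : |α| * A ≤ r) (hβ : |β| * B ≤ r) :
    volume.real (boxSlab A B α β r) ∈ Icc (A * B) (4 * (A * B)) := by
  have h := measureReal_mem_Icc_of_shear_sandwich 0 (S := boxSlab A B α β r)
    (by positivity : 0 ≤ A / 2) (by positivity : 0 ≤ B / 2) hA hB ?_ ?_
  · convert h using 2 <;> ring
  · intro p hp
    rw [mem_shear_preimage_centeredRect, zero_mul, add_zero] at hp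
    refine ⟨by linarith, by linarith, ?_⟩
    calc |α * p.1 + β * p.2| ≤ |α| * |p.1| + |β| * |p.2| := by
          simpa only [abs_mul] using abs_add_le (α * p.1) (β * p.2)
      _ ≤ |α| * (A / 2) + |β| * (B / 2) := by gcongr <;> linarith
      _ ≤ r := by linarith
  · rintro p ⟨hx, hy, -⟩
    rw [mem_shear_preimage_centeredRect, zero_mul, add_zero]
    exact ⟨hx, hy⟩

lemma measureReal_boxSlab_mem_Icc_of_le_abs_mul {A B α β r : ℝ} (hA : 0 < A) (hB : 0 ≤ B)
    (hr : 0 < r) (hrα : r ≤ |α| * A) (hβ : |β| * B ≤ |α| * A) :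
    volume.real (boxSlab A B α β r) ∈ Icc (B * r / |α|) (4 * (B * r / |α|)) := by
  have hα : 0 < |α| := pos_of_mul_pos_left (hr.trans_le hrα) hA.le
  have hshear (p : ℝ × ℝ) : |α| * |p.1 + β / α * p.2| = |α * p.1 + β * p.2| := by
    rw [← abs_mul]; congr 1; field_simp [abs_pos.mp hα]
  have h := measureReal_mem_Icc_of_shear_sandwich (β / α) (S := boxSlab A B α β r)
    (by positivity : 0 ≤ r / (2 * |α|)) (by positivity : 0 ≤ B / 2)
    (by positivity : 0 ≤ r / |α|) hB ?_ ?_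
  · convert h using 2 <;> ring
  · intro p hp
    rw [mem_shear_preimage_centeredRect, le_div_iff₀ (by positivity), mul_comm,
      mul_assoc, hshear] at hp
    obtain ⟨hslab, hy⟩ := hp
    have hx : |α| * |p.1| ≤ |α| * A := calc
      |α| * |p.1| = |(α * p.1 + β * p.2) - β * p.2| := by rw [← abs_mul]; ring_nf
      _ ≤ |α * p.1 + β * p.2| + |β| * |p.2| := by rw [← abs_mul]; exact abs_sub _ _
      _ ≤ r / 2 + |β| * (B / 2) := by gcongr; linarith
      _ ≤ |α| * A := by linarith
    exact ⟨le_of_mul_le_mul_left hx hα, by linarith, by linarith⟩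
  · rintro p ⟨-, hy, hslab⟩
    rw [mem_shear_preimage_centeredRect, le_div_iff₀ hα, mul_comm, hshear]
    exact ⟨hslab, hy⟩

lemma measurableSet_boxSlab (A B α β r : ℝ) : MeasurableSet (boxSlab A B α β r) := by
  unfold boxSlab; measurability

lemma preimage_swap_boxSlab (A B α β r : ℝ) :
    Prod.swap ⁻¹' boxSlab A B α β r = boxSlab B A β α r := by
  ext p
  simp only [boxSlab, mem_preimage, mem_ofPred_eq, Prod.fst_swap, Prod.snd_swap, add_comm]
  tauto

lemma measureReal_boxSlab_mem_Icc {A B α β r M : ℝ} (hA : 0 < A) (hB : 0 < B) (hr : 0 < r)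
    (hrM : r ≤ M) (hαM : |α| * A ≤ M) (hβM : |β| * B ≤ M)
    (hmax : r = M ∨ |α| * A = M ∨ |β| * B = M) :
    volume.real (boxSlab A B α β r) ∈ Icc (A * B * r / M) (4 * (A * B * r / M)) := by
  rcases hmax with rfl | rfl | rfl
  · rw [mul_div_cancel_right₀ _ hr.ne']
    exact measureReal_boxSlab_mem_Icc_of_le hA.le hB.le hαM hβM
  · convert measureReal_boxSlab_mem_Icc_of_le_abs_mul hA hB.le hr hrM hβM using 2 <;> field_simp
  · rw [← preimage_swap_boxSlab B A β α r, measureReal_def,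
      measurePreserving_swap_volume.measure_preimage
        (measurableSet_boxSlab B A β α r).nullMeasurableSet, ← measureReal_def]
    convert measureReal_boxSlab_mem_Icc_of_le_abs_mul hB hA.le hr hrM hαM using 2 <;> field_simp

lemma abs_pow_mul_le_one_and_iff (n : ℕ) (a c z : ℝ) {w : ℝ} (hM : 0 < max (max |a| |c|) |z|) :
    (|a ^ n * w| ≤ 1 ∧ |c ^ n * w| ≤ 1 ∧ |z ^ n * w| ≤ 1) ↔
      |w| ≤ 1 / max (max |a| |c|) |z| ^ n := by
  set M := max (max |a| |c|) |z|
  have hle (x : ℝ) (hx : |x| ≤ M) : |x| ^ n * |w| ≤ M ^ n * |w| := by gcongr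
  have hM_eq : M = |a| ∨ M = |c| ∨ M = |z| := by
    simp only [M, max_def]; split_ifs <;> simp
  simp only [abs_mul, abs_pow]
  rw [le_div_iff₀ (by positivity), mul_comm |w|]
  constructor
  · rintro ⟨ha, hc, hz⟩
    rcases hM_eq with h | h | h <;> rwa [h]
  · intro h
    exact ⟨(hle a (by simp [M])).trans h, (hle c (by simp [M])).trans h,
      (hle z (by simp [M])).trans h⟩

lemma measureReal_boxSlab_div_mem_Icc {n : ℕ} {r α β z : ℝ} (hr : 0 < r)
    (hβ : |β| = |z| ^ (n + 1)) :
    volume.real (boxSlab 1 (1 / max (max r |α|) |z| ^ n) α β r) / r ∈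
      Icc (1 / max (max r |α|) |z| ^ (n + 1)) (4 / max (max r |α|) |z| ^ (n + 1)) := by
  set M := max (max r |α|) |z|
  have hM : 0 < M := hr.trans_le (by simp [M])
  have hzM : |z| ≤ M := le_max_right _ _
  have hβM : |β| * (1 / M ^ n) ≤ M := by
    rw [hβ, mul_one_div, div_le_iff₀ (by positivity), ← pow_succ']; gcongr
  have hmax : r = M ∨ |α| * 1 = M ∨ |β| * (1 / M ^ n) = M := by
    rcases max_choice (max r |α|) |z| with h | h
    · rcases max_choice r |α| with h' | h'
      · exact .inl (by simp only [M, h, h'])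
      · exact .inr (.inl (by simp only [M, h, h', mul_one]))
    · refine .inr (.inr ?_)
      rw [hβ, ← h]; field_simp; ring
  have h := measureReal_boxSlab_mem_Icc one_pos (by positivity) hr (by simp [M]) (by simp [M])
    hβM hmax
  have hscale : 1 * (1 / M ^ n) * r / M = r / M ^ (n + 1) := by field_simp; ring
  rw [hscale] at h
  constructor
  · rw [le_div_iff₀ hr]; convert h.1 using 1; field_simp
  · rw [div_le_iff₀ hr]; convert h.2 using 1; field_simp

lemma omegaInf_of_ne_zero (n : ℕ) {a : ℤ} (c z : ℤ) (ha : a ≠ 0) :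
    omegaInf n a c z =
      volume.real (boxSlab 1 (1 / max (max |(a : ℝ)| |(c : ℝ)|) |(z : ℝ)| ^ n) c
        ((z : ℝ) ^ (n + 1)) |(a : ℝ)|) / |(a : ℝ)| := by
  have ha' : 0 < |(a : ℝ)| := abs_pos.mpr (Int.cast_ne_zero.mpr ha)
  rw [omegaInf, if_pos ha, setIntegral_const, smul_eq_mul, mul_one_div]
  congr 2; ext p
  have hw := abs_pow_mul_le_one_and_iff n a c z (w := p.2)
    (lt_max_of_lt_left (lt_max_of_lt_left ha'))
  simp only [boxSlab, mem_ofPred_eq, abs_div, div_le_one ha', mul_comm p.1]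
  tauto

lemma omegaInf_of_eq_zero (n : ℕ) {a c : ℤ} (z : ℤ) (ha : a = 0) (hc : c ≠ 0) :
    omegaInf n a c z =
      volume.real (boxSlab 1 (1 / max (max |(a : ℝ)| |(c : ℝ)|) |(z : ℝ)| ^ n) a
        (-(z : ℝ) ^ (n + 1)) |(c : ℝ)|) / |(c : ℝ)| := by
  have hc' : 0 < |(c : ℝ)| := abs_pos.mpr (Int.cast_ne_zero.mpr hc)
  rw [omegaInf, if_neg (not_not.mpr ha), setIntegral_const, smul_eq_mul, mul_one_div]
  congr 2; ext p
  have hw := abs_pow_mul_le_one_and_iff n a c z (w := p.2)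
    (lt_max_of_lt_left (lt_max_of_lt_right hc'))
  simp only [boxSlab, mem_ofPred_eq, abs_div, div_le_one hc', neg_mul, ← sub_eq_add_neg]
  tauto

theorem omegaInf_asymp_general (n : ℕ) :
    ∃ c₁ c₂ : ℝ, 0 < c₁ ∧ 0 < c₂ ∧
      ∀ a c z : ℤ, Int.gcd (Int.gcd a c) z = 1 → (a, c) ≠ (0, 0) →
        c₁ / (max (max |(a : ℝ)| |(c : ℝ)|) |(z : ℝ)|) ^ (n + 1) ≤ omegaInf n a c z ∧
        omegaInf n a c z ≤ c₂ / (max (max |(a : ℝ)| |(c : ℝ)|) |(z : ℝ)|) ^ (n + 1) := by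
  refine ⟨1, 4, one_pos, four_pos, fun a c z _ hac => ?_⟩
  by_cases ha : a = 0
  · have hc : c ≠ 0 := by rintro rfl; exact hac (by rw [ha])
    rw [omegaInf_of_eq_zero n z ha hc, max_comm |(a : ℝ)|]
    exact measureReal_boxSlab_div_mem_Icc (abs_pos.mpr (Int.cast_ne_zero.mpr hc))
      (by rw [abs_neg, abs_pow])
  · rw [omegaInf_of_ne_zero n c z ha]
    exact measureReal_boxSlab_div_mem_Icc (abs_pos.mpr (Int.cast_ne_zero.mpr ha)) (abs_pow _ _)

/-- For n ≥ 3 there exist positive constants c₁, c₂ (depending only on n) such that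
for all coprime integers a, c, z with (a,c) ≠ (0,0),
c₁/max(|a|,|c|,|z|)^(n+1) ≤ ω_∞(a,c,z) ≤ c₂/max(|a|,|c|,|z|)^(n+1). -/
theorem omegaInf_asymp (n : ℕ) (hn : 3 ≤ n) :
    ∃ c₁ c₂ : ℝ, 0 < c₁ ∧ 0 < c₂ ∧
      ∀ a c z : ℤ, Int.gcd (Int.gcd a c) z = 1 → (a, c) ≠ (0, 0) →
        c₁ / (max (max |(a : ℝ)| |(c : ℝ)|) |(z : ℝ)|) ^ (n + 1) ≤ omegaInf n a c z ∧
        omegaInf n a c z ≤ c₂ / (max (max |(a : ℝ)| |(c : ℝ)|) |(z : ℝ)|) ^ (n + 1) :=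
  omegaInf_asymp_general n
end

section
/- Let n ≥ 2 and B ≥ 1. Then V₃(B) := ∫∫∫∫∫ over (a,c,d,z,w) ∈ ℝ⁵ with 1 ≤ |w| ≤ B, |a²w| ≤ B, |c²w| ≤ B, |z²w| ≤ B, |(ad − z³w)/c| ≤ B, |d| ≤ B of (1/|c|) da dc dd dz dw equals B² log B multiplied by 2∫∫∫∫_{|a|,|c|,|z|,|(ad−z³)/c|,|d| ≤ 1} (1/|c|) da dc dd dz (the case n = 2). -/
/-!
Fubini puts the `w`-integral outermost. For fixed `w` with `1 ≤ |w| ≤ B`, the linear substitution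
`(a, c, d, z) ↦ (s a, s c, B d, (sign w) s z)` with `s = √(B / |w|)` maps the unit region onto the
`w`-slice of the domain; its Jacobian `s³ B` together with the factor `1 / s` coming from `1 / |c|`
leaves the weight `B² / |w|`, and `∫_{1 ≤ |w| ≤ B} dw / |w| = 2 log B`. The computation is done with
lower Lebesgue integrals, so the finiteness of the unit-region integral is never needed.
-/

open MeasureTheory Set
open scoped ENNReal

theorem lintegral_eq_lintegral_lintegral_last {α β γ δ ε : Type*} [MeasureSpace α]
    [MeasureSpace β] [MeasureSpace γ] [MeasureSpace δ] [MeasureSpace ε]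
    [SFinite (volume : Measure α)] [SFinite (volume : Measure β)]
    [SFinite (volume : Measure γ)] [SFinite (volume : Measure δ)]
    [SFinite (volume : Measure ε)] {F : α × β × γ × δ × ε → ℝ≥0∞} (hF : Measurable F) :
    ∫⁻ v, F v = ∫⁻ w, ∫⁻ x : α × β × γ × δ, F (x.1, x.2.1, x.2.2.1, x.2.2.2, w) := by
  have hassoc : MeasurePreserving
      (fun p : (α × β × γ × δ) × ε => (p.1.1, p.1.2.1, p.1.2.2.1, p.1.2.2.2, p.2)) :=
    ((MeasurePreserving.id volume).prod ((MeasurePreserving.id volume).prod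
      volume_preserving_prodAssoc)).comp
      (((MeasurePreserving.id volume).prod volume_preserving_prodAssoc).comp
        volume_preserving_prodAssoc)
  rw [← hassoc.lintegral_comp hF, Measure.volume_eq_prod]
  exact lintegral_prod_symm _ (hF.comp hassoc.measurable).aemeasurable

theorem lintegral_comp_linearMap {E : Type*} [NormedAddCommGroup E] [NormedSpace ℝ E]
    [MeasurableSpace E] [BorelSpace E] [FiniteDimensional ℝ E] (μ : Measure E)
    [μ.IsAddHaarMeasure] {f : E →ₗ[ℝ] E} (hf : LinearMap.det f ≠ 0) {g : E → ℝ≥0∞}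
    (hg : Measurable g) :
    ∫⁻ x, g x ∂μ = ENNReal.ofReal |LinearMap.det f| * ∫⁻ x, g (f x) ∂μ := by
  rw [← lintegral_map hg f.continuous_of_finiteDimensional.measurable,
    Measure.map_linearMap_addHaar_eq_smul_addHaar μ hf, lintegral_smul_measure, smul_eq_mul,
    ← mul_assoc, ← ENNReal.ofReal_mul (abs_nonneg _), ← abs_mul, mul_inv_cancel₀ hf, abs_one,
    ENNReal.ofReal_one, one_mul]

theorem lintegral_comp_mul_prod4 {g : ℝ × ℝ × ℝ × ℝ → ℝ≥0∞} (hg : Measurable g)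
    {s₁ s₂ s₃ s₄ : ℝ} (h : s₁ * s₂ * s₃ * s₄ ≠ 0) :
    ∫⁻ x, g x = ENNReal.ofReal |s₁ * s₂ * s₃ * s₄| *
      ∫⁻ x : ℝ × ℝ × ℝ × ℝ, g (s₁ * x.1, s₂ * x.2.1, s₃ * x.2.2.1, s₄ * x.2.2.2) := by
  let L : (ℝ × ℝ × ℝ × ℝ) →ₗ[ℝ] ℝ × ℝ × ℝ × ℝ :=
    (s₁ • LinearMap.id).prodMap ((s₂ • LinearMap.id).prodMap
      ((s₃ • LinearMap.id).prodMap (s₄ • LinearMap.id)))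
  have hL : LinearMap.det L = s₁ * s₂ * s₃ * s₄ := by
    simp only [L, LinearMap.det_prodMap, LinearMap.det_ring, LinearMap.smul_apply,
      LinearMap.id_coe, id_eq, smul_eq_mul, mul_one]
    ring
  have : (volume : Measure (ℝ × ℝ × ℝ)).IsAddHaarMeasure := Measure.prod.instIsAddHaarMeasure _ _
  have : (volume : Measure (ℝ × ℝ × ℝ × ℝ)).IsAddHaarMeasure :=
    Measure.prod.instIsAddHaarMeasure _ _
  rw [lintegral_comp_linearMap volume (hL ▸ h) hg, hL]
  rfl

theorem lintegral_comp_abs {f : ℝ → ℝ≥0∞} (hf : Measurable f) :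
    ∫⁻ x, f |x| = 2 * ∫⁻ x in Ioi 0, f x := by
  have hsplit : (fun x => f |x|) =ᵐ[volume]
      fun x => (Ioi 0).indicator f x + (Ioi 0).indicator f (-x) := by
    filter_upwards [Measure.ae_ne volume 0] with x hx
    rcases hx.lt_or_gt with hneg | hpos
    · simp [hneg, hneg.not_gt, abs_of_neg hneg]
    · simp [hpos, hpos.le, abs_of_pos hpos]
  rw [lintegral_congr_ae hsplit, lintegral_add_left (hf.indicator measurableSet_Ioi),
    lintegral_neg_eq_self, lintegral_indicator measurableSet_Ioi, two_mul]

theorem setLIntegral_Icc_ofReal_inv {a b : ℝ} (ha : 0 < a) (hab : a ≤ b) :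
    ∫⁻ t in Icc a b, ENNReal.ofReal t⁻¹ = ENNReal.ofReal (Real.log (b / a)) := by
  have hpos : ∀ t ∈ Icc a b, 0 < t := fun t ht => ha.trans_le ht.1
  rw [← ofReal_integral_eq_lintegral_ofReal
      ((continuousOn_inv₀.mono fun t ht => (hpos t ht).ne').integrableOn_Icc)
      ((ae_restrict_iff' measurableSet_Icc).mpr
        (.of_forall fun t ht => (inv_pos.mpr (hpos t ht)).le)),
    integral_Icc_eq_integral_Ioc, ← intervalIntegral.integral_of_le hab,
    integral_inv (fun h => (hpos 0 (uIcc_of_le hab ▸ h)).false)]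

def V3Domain (B : ℝ) : Set (ℝ × ℝ × ℝ × ℝ × ℝ) :=
  {v | 1 ≤ |v.2.2.2.2| ∧ |v.2.2.2.2| ≤ B ∧
    |v.1 ^ 2 * v.2.2.2.2| ≤ B ∧ |v.2.1 ^ 2 * v.2.2.2.2| ≤ B ∧
    |v.2.2.2.1 ^ 2 * v.2.2.2.2| ≤ B ∧
    |(v.1 * v.2.2.1 - v.2.2.2.1 ^ 3 * v.2.2.2.2) / v.2.1| ≤ B ∧
    |v.2.2.1| ≤ B}

def V3UnitDomain : Set (ℝ × ℝ × ℝ × ℝ) :=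
  {v | |v.1| ≤ 1 ∧ |v.2.1| ≤ 1 ∧ |v.2.2.2| ≤ 1 ∧
    |(v.1 * v.2.2.1 - v.2.2.2 ^ 3) / v.2.1| ≤ 1 ∧ |v.2.2.1| ≤ 1}

theorem measurableSet_V3Domain (B : ℝ) : MeasurableSet (V3Domain B) :=
  measurableSet_setOfPred.mpr (by fun_prop)

theorem measurableSet_V3UnitDomain : MeasurableSet V3UnitDomain :=
  measurableSet_setOfPred.mpr (by fun_prop)

theorem measurable_indicator_V3Domain (B : ℝ) :
    Measurable ((V3Domain B).indicator fun v => ENNReal.ofReal (1 / |v.2.1|)) :=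
  (by fun_prop : Measurable fun v : ℝ × ℝ × ℝ × ℝ × ℝ => ENNReal.ofReal (1 / |v.2.1|)).indicator
    (measurableSet_V3Domain B)

theorem scale_mem_V3Domain_iff {B s ε w : ℝ} (hs : 0 < s) (hsw : s ^ 2 * |w| = B)
    (hε : ε * w = |w|) (hw : 1 ≤ |w| ∧ |w| ≤ B) (a c d z : ℝ) :
    (s * a, s * c, B * d, ε * s * z, w) ∈ V3Domain B ↔ (a, c, d, z) ∈ V3UnitDomain := by
  have hB : 0 < B := one_pos.trans_le (hw.1.trans hw.2)
  have hw0 : w ≠ 0 := abs_pos.mp (one_pos.trans_le hw.1)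
  have hε2 : ε ^ 2 = 1 := by
    have : ε ^ 2 * w ^ 2 = 1 * w ^ 2 := by linear_combination (ε * w + |w|) * hε + sq_abs w
    exact mul_right_cancel₀ (pow_ne_zero 2 hw0) this
  have hsq (x : ℝ) : |(s * x) ^ 2 * w| ≤ B ↔ |x| ≤ 1 := by
    rw [abs_mul, abs_of_nonneg (sq_nonneg _), ← sq_le_one_iff_abs_le_one,
      show (s * x) ^ 2 * |w| = x ^ 2 * B by rw [← hsw]; ring, mul_le_iff_le_one_left hB]
  have hz : (ε * s * z) ^ 2 = (s * z) ^ 2 := by linear_combination (s * z) ^ 2 * hε2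
  have hfrac : (s * a * (B * d) - (ε * s * z) ^ 3 * w) / (s * c) = B * ((a * d - z ^ 3) / c) := by
    -- `(ε s)³ w = s³ |w| = s B`
    rw [show s * a * (B * d) - (ε * s * z) ^ 3 * w = s * (B * (a * d - z ^ 3)) by
        linear_combination (-(ε ^ 2 * s ^ 3 * z ^ 3)) * hε - s ^ 3 * z ^ 3 * |w| * hε2
          - s * z ^ 3 * hsw,
      mul_div_mul_left _ _ hs.ne', mul_div_assoc]
  have hBmul (x : ℝ) : |B * x| ≤ B ↔ |x| ≤ 1 := by
    rw [abs_mul, abs_of_pos hB, mul_le_iff_le_one_right hB]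
  simp only [V3Domain, V3UnitDomain, mem_ofPred_eq, hz, hsq, hfrac, hBmul, hw, true_and]

theorem indicator_V3Domain_scale {B s ε w : ℝ} (hs : 0 < s) (hsw : s ^ 2 * |w| = B)
    (hε : ε * w = |w|) (hw : 1 ≤ |w| ∧ |w| ≤ B) (a c d z : ℝ) :
    (V3Domain B).indicator (fun v => ENNReal.ofReal (1 / |v.2.1|))
        (s * a, s * c, B * d, ε * s * z, w) = ENNReal.ofReal s⁻¹ *
          V3UnitDomain.indicator (fun v => ENNReal.ofReal (1 / |v.2.1|)) (a, c, d, z) := by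
  by_cases h : (a, c, d, z) ∈ V3UnitDomain
  · rw [indicator_of_mem ((scale_mem_V3Domain_iff hs hsw hε hw a c d z).mpr h),
      indicator_of_mem h, ← ENNReal.ofReal_mul (inv_nonneg.mpr hs.le), abs_mul, abs_of_pos hs,
      one_div, one_div, mul_inv]
  · rw [indicator_of_notMem (mt (scale_mem_V3Domain_iff hs hsw hε hw a c d z).mp h),
      indicator_of_notMem h, mul_zero]

theorem lintegral_slice_V3Domain {B : ℝ} (hB : 1 ≤ B) (w : ℝ) :
    ∫⁻ x : ℝ × ℝ × ℝ × ℝ, (V3Domain B).indicator (fun v => ENNReal.ofReal (1 / |v.2.1|))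
        (x.1, x.2.1, x.2.2.1, x.2.2.2, w)
      = (Icc 1 B).indicator (fun t => ENNReal.ofReal (B ^ 2 / t)) |w| *
          ∫⁻ x in V3UnitDomain, ENNReal.ofReal (1 / |x.2.1|) := by
  by_cases hw : |w| ∈ Icc 1 B
  · have hw0 : 0 < |w| := one_pos.trans_le hw.1
    set s := √(B / |w|)
    set ε : ℝ := (SignType.sign w : ℝ)
    have hs : 0 < s := Real.sqrt_pos.mpr (by positivity)
    have hsw : s ^ 2 * |w| = B := by
      rw [Real.sq_sqrt (by positivity), div_mul_cancel₀ _ hw0.ne']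
    have hε : ε * w = |w| := sign_mul_self w
    have hεabs : |ε| = 1 := by
      rw [← mul_left_inj' hw0.ne', one_mul, ← abs_mul, hε, abs_abs]
    have habs : |s * s * B * (ε * s)| = s ^ 3 * B := by
      rw [abs_mul, abs_mul, abs_mul, abs_mul, hεabs, abs_of_pos hs, abs_of_pos (by linarith)]
      ring
    have hdet : |s * s * B * (ε * s)| * s⁻¹ = B ^ 2 / |w| := by
      rw [habs, ← hsw]
      field_simp
    have hmeas : Measurable fun x : ℝ × ℝ × ℝ × ℝ => (V3Domain B).indicator
        (fun v => ENNReal.ofReal (1 / |v.2.1|)) (x.1, x.2.1, x.2.2.1, x.2.2.2, w) :=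
      (measurable_indicator_V3Domain B).comp (by fun_prop)
    have hscaled : ∀ x : ℝ × ℝ × ℝ × ℝ, (V3Domain B).indicator
        (fun v => ENNReal.ofReal (1 / |v.2.1|))
        (s * x.1, s * x.2.1, B * x.2.2.1, ε * s * x.2.2.2, w) =
        ENNReal.ofReal s⁻¹ * V3UnitDomain.indicator (fun v => ENNReal.ofReal (1 / |v.2.1|)) x :=
      fun x => indicator_V3Domain_scale hs hsw hε hw x.1 x.2.1 x.2.2.1 x.2.2.2
    rw [lintegral_comp_mul_prod4 hmeas (s₁ := s) (s₂ := s) (s₃ := B) (s₄ := ε * s)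
        (abs_pos.mp (habs ▸ by positivity))]
    simp only [hscaled]
    rw [lintegral_const_mul' _ _ ENNReal.ofReal_ne_top, ← mul_assoc,
      ← ENNReal.ofReal_mul (abs_nonneg _), hdet, indicator_of_mem hw,
      lintegral_indicator measurableSet_V3UnitDomain]
  · have hzero : ∀ x : ℝ × ℝ × ℝ × ℝ, (V3Domain B).indicator
        (fun v => ENNReal.ofReal (1 / |v.2.1|)) (x.1, x.2.1, x.2.2.1, x.2.2.2, w) = 0 :=
      fun x => indicator_of_notMem (fun h => hw ⟨h.1, h.2.1⟩) _
    simp only [hzero, lintegral_zero, indicator_of_notMem hw, zero_mul]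

theorem lintegral_indicator_Icc_div_comp_abs {B : ℝ} (hB : 1 ≤ B) :
    ∫⁻ w, (Icc 1 B).indicator (fun t => ENNReal.ofReal (B ^ 2 / t)) |w|
      = ENNReal.ofReal (2 * B ^ 2 * Real.log B) := by
  have hIcc : Icc 1 B ⊆ Ioi (0 : ℝ) := fun t ht => one_pos.trans_le ht.1
  rw [lintegral_comp_abs
      ((by fun_prop : Measurable fun t : ℝ => ENNReal.ofReal (B ^ 2 / t)).indicator
        measurableSet_Icc), setLIntegral_indicator measurableSet_Icc, inter_eq_left.mpr hIcc]
  simp_rw [div_eq_mul_inv, ENNReal.ofReal_mul (sq_nonneg B)]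
  rw [lintegral_const_mul' _ _ ENNReal.ofReal_ne_top, setLIntegral_Icc_ofReal_inv one_pos hB,
    div_one, ← ENNReal.ofReal_mul (sq_nonneg B), mul_assoc, ENNReal.ofReal_mul zero_le_two,
    ENNReal.ofReal_ofNat]

theorem lintegral_V3Domain {B : ℝ} (hB : 1 ≤ B) :
    ∫⁻ v in V3Domain B, ENNReal.ofReal (1 / |v.2.1|)
      = ENNReal.ofReal (2 * B ^ 2 * Real.log B) *
          ∫⁻ x in V3UnitDomain, ENNReal.ofReal (1 / |x.2.1|) := by
  have hweight : Measurable fun w : ℝ =>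
      (Icc 1 B).indicator (fun t => ENNReal.ofReal (B ^ 2 / t)) |w| :=
    ((by fun_prop : Measurable fun t : ℝ => ENNReal.ofReal (B ^ 2 / t)).indicator
      measurableSet_Icc).comp measurable_abs
  rw [← lintegral_indicator (measurableSet_V3Domain B),
    lintegral_eq_lintegral_lintegral_last (measurable_indicator_V3Domain B),
    lintegral_congr fun w => lintegral_slice_V3Domain hB w,
    lintegral_mul_const _ hweight, lintegral_indicator_Icc_div_comp_abs hB]

/-- For B ≥ 1 (case n = 2): the integral V₃(B) over (a,c,d,z,w) ∈ ℝ⁵ with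
1 ≤ |w| ≤ B, |a²w| ≤ B, |c²w| ≤ B, |z²w| ≤ B, |(ad − z³w)/c| ≤ B, |d| ≤ B of 1/|c|
equals B² log B times 2∫∫∫∫_{|a|,|c|,|z|,|(ad−z³)/c|,|d| ≤ 1} (1/|c|) da dc dd dz. -/
theorem V3_eq (B : ℝ) (hB : 1 ≤ B) :
    (∫ v in {v : ℝ × ℝ × ℝ × ℝ × ℝ |
        1 ≤ |v.2.2.2.2| ∧ |v.2.2.2.2| ≤ B ∧
        |v.1 ^ 2 * v.2.2.2.2| ≤ B ∧ |v.2.1 ^ 2 * v.2.2.2.2| ≤ B ∧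
        |v.2.2.2.1 ^ 2 * v.2.2.2.2| ≤ B ∧
        |(v.1 * v.2.2.1 - v.2.2.2.1 ^ 3 * v.2.2.2.2) / v.2.1| ≤ B ∧
        |v.2.2.1| ≤ B},
      (1 / |v.2.1| : ℝ)) =
    B ^ 2 * Real.log B *
      (2 * ∫ v in {v : ℝ × ℝ × ℝ × ℝ |
          |v.1| ≤ 1 ∧ |v.2.1| ≤ 1 ∧ |v.2.2.2| ≤ 1 ∧
          |(v.1 * v.2.2.1 - v.2.2.2 ^ 3) / v.2.1| ≤ 1 ∧ |v.2.2.1| ≤ 1},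
        (1 / |v.2.1| : ℝ)) := by
  rw [integral_eq_lintegral_of_nonneg_ae (.of_forall fun _ => by positivity)
      (by fun_prop : Measurable fun v : ℝ × ℝ × ℝ × ℝ × ℝ => 1 / |v.2.1|).aestronglyMeasurable,
    integral_eq_lintegral_of_nonneg_ae (.of_forall fun _ => by positivity)
      (by fun_prop : Measurable fun v : ℝ × ℝ × ℝ × ℝ => 1 / |v.2.1|).aestronglyMeasurable]
  change (∫⁻ v in V3Domain B, _).toReal = _ * (2 * (∫⁻ x in V3UnitDomain, _).toReal)
  rw [lintegral_V3Domain hB, ENNReal.toReal_mul,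
    ENNReal.toReal_ofReal (by have := Real.log_nonneg hB; positivity)]
  ring
end
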